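/- arXiv:1006.0716 — 2 statements merged into one kernel-verified Lean document; each statement's English description precedes it below -/
import Mathlib

section
/- Let k₃ : ℝ → ℝ be continuous and nowhere zero, set θ(s) = ∫₀ˢ k₃(t) dt, and let r, f : ℝ → ℝ be differentiable with r'(s) = f(s)·k₃(s) and f'(s) = k₃(s)·r(s). Then there exist constants C₁, C₂ such that r(s) = C₁·cosh(θ(s)) + C₂·sinh(θ(s)) for all s. -/
/-!
With `θ' = k₃`, the system `r' = f k₃`, `f' = r k₃` is a hyperbolic rotation at angular speed
`θ'`, so rotating back by `θ` gives conserved quantities: `r cosh θ - f sinh θ` and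
`f cosh θ - r sinh θ` have zero derivative. Since `cosh² - sinh² = 1`, the rotation is inverted
by rotating forward again, which expresses `r` through these two constants.
-/

open Real

theorem hasDerivAt_mul_cosh_sub_mul_sinh {u v θ : ℝ → ℝ} {k x : ℝ}
    (hu : HasDerivAt u (v x * k) x) (hv : HasDerivAt v (u x * k) x) (hθ : HasDerivAt θ k x) :
    HasDerivAt (fun s => u s * cosh (θ s) - v s * sinh (θ s)) 0 x := by
  have h := (hu.mul (hθ.cosh)).sub (hv.mul (hθ.sinh))
  exact h.congr_deriv (by ring)

theorem mul_cosh_sub_mul_sinh_eq {u v θ k : ℝ → ℝ}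
    (hu : ∀ x, HasDerivAt u (v x * k x) x) (hv : ∀ x, HasDerivAt v (u x * k x) x)
    (hθ : ∀ x, HasDerivAt θ (k x) x) (x y : ℝ) :
    u x * cosh (θ x) - v x * sinh (θ x) = u y * cosh (θ y) - v y * sinh (θ y) :=
  have hD := fun x => hasDerivAt_mul_cosh_sub_mul_sinh (hu x) (hv x) (hθ x)
  is_const_of_deriv_eq_zero (fun x => (hD x).differentiableAt) (fun x => (hD x).deriv) x y

theorem eq_mul_cosh_add_mul_sinh {a b A B t : ℝ}
    (ha : a * cosh t - b * sinh t = A) (hb : b * cosh t - a * sinh t = B) :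
    a = A * cosh t + B * sinh t := by
  linear_combination cosh t * ha + sinh t * hb - a * cosh_sq_sub_sinh_sq t

theorem eq_cosh_add_sinh_of_hasDerivAt {u v θ k : ℝ → ℝ}
    (hu : ∀ x, HasDerivAt u (v x * k x) x) (hv : ∀ x, HasDerivAt v (u x * k x) x)
    (hθ : ∀ x, HasDerivAt θ (k x) x) (hθ₀ : θ 0 = 0) (x : ℝ) :
    u x = u 0 * cosh (θ x) + v 0 * sinh (θ x) := by
  have hm := mul_cosh_sub_mul_sinh_eq hu hv hθ x 0
  have hn := mul_cosh_sub_mul_sinh_eq hv hu hθ x 0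
  simp only [hθ₀, cosh_zero, sinh_zero, mul_one, mul_zero, sub_zero] at hm hn
  exact eq_mul_cosh_add_mul_sinh hm hn

theorem stmt_6_general (k₃ r f : ℝ → ℝ)
    (hk₃c : Continuous k₃)
    (hr : Differentiable ℝ r) (hf : Differentiable ℝ f)
    (h1 : ∀ s, deriv r s = f s * k₃ s)
    (h2 : ∀ s, deriv f s = k₃ s * r s) :
    ∃ C₁ C₂ : ℝ, ∀ s, r s = C₁ * Real.cosh (∫ t in (0:ℝ)..s, k₃ t)
        + C₂ * Real.sinh (∫ t in (0:ℝ)..s, k₃ t) := by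
  have hθ : ∀ s, HasDerivAt (fun s => ∫ t in (0:ℝ)..s, k₃ t) (k₃ s) s := fun s =>
    intervalIntegral.integral_hasDerivAt_right (hk₃c.intervalIntegrable _ _)
      (hk₃c.stronglyMeasurableAtFilter _ _) hk₃c.continuousAt
  have hr' : ∀ s, HasDerivAt r (f s * k₃ s) s := fun s => h1 s ▸ (hr s).hasDerivAt
  have hf' : ∀ s, HasDerivAt f (r s * k₃ s) s := fun s =>
    mul_comm (k₃ s) (r s) ▸ h2 s ▸ (hf s).hasDerivAt
  exact ⟨r 0, f 0, eq_cosh_add_sinh_of_hasDerivAt hr' hf' hθ intervalIntegral.integral_same⟩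

theorem stmt_6 (k₃ r f : ℝ → ℝ)
    (hk₃c : Continuous k₃) (hk₃ne : ∀ s, k₃ s ≠ 0)
    (hr : Differentiable ℝ r) (hf : Differentiable ℝ f)
    (h1 : ∀ s, deriv r s = f s * k₃ s)
    (h2 : ∀ s, deriv f s = k₃ s * r s) :
    ∃ C₁ C₂ : ℝ, ∀ s, r s = C₁ * Real.cosh (∫ t in (0:ℝ)..s, k₃ t)
        + C₂ * Real.sinh (∫ t in (0:ℝ)..s, k₃ t) :=
  stmt_6_general k₃ r f hk₃c hr hf h1 h2
end

section
/- Let k₃ : ℝ → ℝ be continuous and nowhere zero, θ(s) = ∫₀ˢ k₃(t) dt, and let γ(s) = A·cosh(θ(s)) + B·sinh(θ(s)) with constants A, B. Suppose there are differentiable functions r, f with γ'(s)/k₃(s) = -r(s)·c and γ(s) = -f(s)·c for a nonzero constant c. Then B² - A² = c²·(r(s)² - f(s)²) for all s; in particular r(s)² - f(s)² is constant. -/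
/-! Since θ' = k₃, the hypotheses say `r c = -(A sinh θ + B cosh θ)` and
`f c = -(A cosh θ + B sinh θ)`; by `cosh² - sinh² = 1` the difference of the squares of these
two combinations is `B² - A²`, whatever `θ` is. -/

open Real

theorem Real.sq_mul_sinh_add_mul_cosh_sub_sq_mul_cosh_add_mul_sinh (A B x : ℝ) :
    (A * sinh x + B * cosh x) ^ 2 - (A * cosh x + B * sinh x) ^ 2 = B ^ 2 - A ^ 2 := by
  linear_combination (B ^ 2 - A ^ 2) * cosh_sq_sub_sinh_sq x

theorem hasDerivAt_mul_cosh_add_mul_sinh {θ : ℝ → ℝ} {θ' s : ℝ} (A B : ℝ)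
    (hθ : HasDerivAt θ θ' s) :
    HasDerivAt (fun u => A * cosh (θ u) + B * sinh (θ u))
      ((A * sinh (θ s) + B * cosh (θ s)) * θ') s := by
  rw [add_mul, mul_assoc, mul_assoc]
  exact (hθ.cosh.const_mul A).add (hθ.sinh.const_mul B)

theorem stmt_15_general (k₃ r f : ℝ → ℝ) (A B c : ℝ) (γ : ℝ → ℝ)
    (hk₃c : Continuous k₃) (hk₃ne : ∀ s, k₃ s ≠ 0)
    (hγ : ∀ s, γ s = A * Real.cosh (∫ t in (0:ℝ)..s, k₃ t)
        + B * Real.sinh (∫ t in (0:ℝ)..s, k₃ t))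
    (h1 : ∀ s, deriv γ s / k₃ s = -(r s * c))
    (h2 : ∀ s, γ s = -(f s * c)) :
    ∀ s, B ^ 2 - A ^ 2 = c ^ 2 * (r s ^ 2 - f s ^ 2) := by
  intro s
  set θ : ℝ → ℝ := fun s => ∫ t in (0:ℝ)..s, k₃ t
  have hθ : HasDerivAt θ (k₃ s) s := (hk₃c.integral_hasStrictDerivAt 0 s).hasDerivAt
  have hγ' : deriv γ s = (A * sinh (θ s) + B * cosh (θ s)) * k₃ s := by
    rw [funext hγ]
    exact (hasDerivAt_mul_cosh_add_mul_sinh A B hθ).deriv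
  have hrc : r s * c = -(A * sinh (θ s) + B * cosh (θ s)) := by
    have := h1 s
    rw [hγ', mul_div_cancel_right₀ _ (hk₃ne s)] at this
    linarith
  have hfc : f s * c = -(A * cosh (θ s) + B * sinh (θ s)) := by linarith [h2 s, hγ s]
  calc B ^ 2 - A ^ 2
      = (A * sinh (θ s) + B * cosh (θ s)) ^ 2 - (A * cosh (θ s) + B * sinh (θ s)) ^ 2 :=
        (sq_mul_sinh_add_mul_cosh_sub_sq_mul_cosh_add_mul_sinh A B (θ s)).symm
    _ = (r s * c) ^ 2 - (f s * c) ^ 2 := by rw [hrc, hfc]; ring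
    _ = c ^ 2 * (r s ^ 2 - f s ^ 2) := by ring

theorem stmt_15 (k₃ r f : ℝ → ℝ) (A B c : ℝ) (γ : ℝ → ℝ)
    (hk₃c : Continuous k₃) (hk₃ne : ∀ s, k₃ s ≠ 0)
    (hγ : ∀ s, γ s = A * Real.cosh (∫ t in (0:ℝ)..s, k₃ t)
        + B * Real.sinh (∫ t in (0:ℝ)..s, k₃ t))
    (hr : Differentiable ℝ r) (hf : Differentiable ℝ f)
    (hc : c ≠ 0)
    (h1 : ∀ s, deriv γ s / k₃ s = -(r s * c))
    (h2 : ∀ s, γ s = -(f s * c)) :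
    ∀ s, B ^ 2 - A ^ 2 = c ^ 2 * (r s ^ 2 - f s ^ 2) :=
  stmt_15_general k₃ r f A B c γ hk₃c hk₃ne hγ h1 h2
end
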